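/- Let f = (f_0, f_1, …) and β = (β_0, β_1, …) be eventually-zero sequences of nonnegative integers. Then the following are equivalent: (i) for all k ≥ 1, χ_k + β_k ≥ 0 and ∂_k(χ_k + β_k) ≤ χ_{k−1}; (ii) for all k ≥ 1, 0 ≤ f_k − χ_{k−1} ≤ ∂^k(f_k). -/
import Mathlib


/-- Fold a function `g` over the terms `(a_t, t)` of the unique Macaulay-type
representation `n = C(a_{k+1}, k+1) + ⋯ + C(a_i, i)` with
`a_{k+1} > ⋯ > a_i ≥ i ≥ 1`, computed greedily: at each level `t` (from `k+1`
down), `a_t` is the largest `a` with `C(a, t) ≤` the current remainder. -/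
def macRepFold (g : ℕ → ℕ → ℕ) : ℕ → ℕ → ℕ
  | 0, _ => 0
  | t + 1, n =>
    if n = 0 then 0
    else
      let a := Nat.findGreatest (fun a => Nat.choose a (t + 1) ≤ n) (n + t + 1)
      g a (t + 1) + macRepFold g t (n - Nat.choose a (t + 1))

/-- The combinatorial shadow function `∂_k(n) = Σ_t C(a_t, t - 1)`. -/
def partialLower (k n : ℕ) : ℕ := macRepFold (fun a t => Nat.choose a (t - 1)) (k + 1) n

/-- The combinatorial shadow function `∂^k(n) = Σ_t C(a_t - 1, t)`. -/
def partialUpper (k n : ℕ) : ℕ := macRepFold (fun a t => Nat.choose (a - 1) t) (k + 1) n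

/-- The error function `δ_k(n) = #{t : a_t = t}`. -/
def deltaErr (k n : ℕ) : ℕ := macRepFold (fun a t => if a = t then 1 else 0) (k + 1) n

/-- The function `d^k(n) = Σ_t C(a_t + 1, t)`. -/
def dUpper (k n : ℕ) : ℕ := macRepFold (fun a t => Nat.choose (a + 1) t) (k + 1) n

namespace MacAux

lemma le_choose : ∀ (d q : ℕ), 1 ≤ q → d + 1 ≤ Nat.choose (q + d) q := by
  intro d
  induction d with
  | zero => intro q hq; simp
  | succ d ih =>
      intro q hq
      obtain ⟨q, rfl⟩ : ∃ q', q = q' + 1 := ⟨q - 1, by omega⟩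
      have h1 : 0 < Nat.choose (q + 1 + d) q := Nat.choose_pos (by omega)
      have h2 := ih (q + 1) (by omega)
      have : q + 1 + (d + 1) = (q + (d + 1)) + 1 := by omega
      rw [this, Nat.choose_succ_succ']
      have : q + (d + 1) = q + 1 + d := by omega
      rw [this]
      have hpos : 0 < Nat.choose (q + 1 + d) q := Nat.choose_pos (by omega)
      omega

lemma choose_lb {p q : ℕ} (hq : 1 ≤ q) (hpq : q ≤ p) : p - q + 1 ≤ Nat.choose p q := by
  have h := le_choose (p - q) q hq
  rwa [show q + (p - q) = p by omega] at h

lemma greedy_bounds {t n : ℕ} (ht : 1 ≤ t) (hn : 0 < n) :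
    t ≤ Nat.findGreatest (fun a => Nat.choose a t ≤ n) (n + t) ∧
      Nat.choose (Nat.findGreatest (fun a => Nat.choose a t ≤ n) (n + t)) t ≤ n ∧
      n < Nat.choose (Nat.findGreatest (fun a => Nat.choose a t ≤ n) (n + t) + 1) t := by
  set A := Nat.findGreatest (fun a => Nat.choose a t ≤ n) (n + t) with hA
  have hwit : Nat.choose t t ≤ n := by rw [Nat.choose_self]; omega
  have h1 : t ≤ A := Nat.le_findGreatest (by omega) hwit
  have h2 : Nat.choose A t ≤ n := Nat.findGreatest_spec (P := fun a => Nat.choose a t ≤ n) (by omega) hwit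
  have hAle : A ≤ n + t := Nat.findGreatest_le _
  have hAlt : A < n + t := by
    rcases lt_or_eq_of_le hAle with h | h
    · exact h
    · exfalso
      have := choose_lb (p := n + t) (q := t) ht (by omega)
      rw [h] at h2; omega
  have h3 : ¬ Nat.choose (A + 1) t ≤ n :=
    Nat.findGreatest_is_greatest (P := fun a => Nat.choose a t ≤ n) (n := n + t)
      (k := A + 1) (by omega) (by omega)
  exact ⟨h1, h2, by omega⟩

lemma findGreatest_eq {t n a : ℕ} (ht : 1 ≤ t) (hta : t ≤ a)
    (h1 : Nat.choose a t ≤ n) (h2 : n < Nat.choose (a + 1) t) :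
    Nat.findGreatest (fun x => Nat.choose x t ≤ n) (n + t) = a := by
  have hub : a ≤ n + t := by
    have := choose_lb (p := a) (q := t) ht hta
    omega
  have hle : a ≤ Nat.findGreatest (fun x => Nat.choose x t ≤ n) (n + t) :=
    Nat.le_findGreatest hub h1
  rcases lt_or_eq_of_le hle with h | h
  · exfalso
    have hspec : Nat.choose (Nat.findGreatest (fun x => Nat.choose x t ≤ n) (n + t)) t ≤ n :=
      Nat.findGreatest_spec (P := fun x => Nat.choose x t ≤ n) (m := a) hub h1
    have : Nat.choose (a + 1) t ≤ Nat.choose (Nat.findGreatest (fun x => Nat.choose x t ≤ n) (n + t)) t :=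
      Nat.choose_le_choose _ (by omega)
    omega
  · omega

lemma macRepFold_zero (g : ℕ → ℕ → ℕ) (t : ℕ) : macRepFold g t 0 = 0 := by
  cases t <;> simp [macRepFold]

lemma macRepFold_step (g : ℕ → ℕ → ℕ) {t n a : ℕ} (ht : 1 ≤ t) (hn : 0 < n) (hta : t ≤ a)
    (h1 : Nat.choose a t ≤ n) (h2 : n < Nat.choose (a + 1) t) :
    macRepFold g t n = g a t + macRepFold g (t - 1) (n - Nat.choose a t) := by
  obtain ⟨s, rfl⟩ : ∃ s, t = s + 1 := ⟨t - 1, by omega⟩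
  rw [macRepFold]
  simp only [if_neg hn.ne']
  have hb : n + s + 1 = n + (s + 1) := by omega
  rw [show (Nat.findGreatest (fun a => Nat.choose a (s + 1) ≤ n) (n + s + 1)) =
      Nat.findGreatest (fun a => Nat.choose a (s + 1) ≤ n) (n + (s + 1)) by rw [hb]]
  rw [findGreatest_eq ht hta h1 h2]
  simp

end MacAux

namespace MacAux2
open MacAux

/-- `D t n = Σ C(a_s+1, s)` over the rep of `n` at level `t`. -/
def D (t n : ℕ) : ℕ := macRepFold (fun x s => Nat.choose (x + 1) s) t n
/-- `U t n = Σ C(a_s-1, s)`. -/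
def U (t n : ℕ) : ℕ := macRepFold (fun x s => Nat.choose (x - 1) s) t n
/-- `E t n = #{s : a_s = s}`. -/
def E (t n : ℕ) : ℕ := macRepFold (fun x s => if x = s then 1 else 0) t n

lemma top_le {t a1 a2 n : ℕ} (h1 : Nat.choose a1 t ≤ n) (h2 : n < Nat.choose (a2 + 1) t) :
    a1 ≤ a2 := by
  by_contra h
  have := Nat.choose_le_choose t (show a2 + 1 ≤ a1 by omega)
  omega

lemma fold_one (g : ℕ → ℕ → ℕ) {n : ℕ} (hn : 0 < n) : macRepFold g 1 n = g n 1 := by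
  rw [macRepFold_step g le_rfl hn (by omega : 1 ≤ n)
    (by rw [Nat.choose_one_right]) (by rw [Nat.choose_one_right]; omega)]
  simp [macRepFold]

lemma macRepFold_congr {g1 g2 : ℕ → ℕ → ℕ} (h : ∀ a t, 1 ≤ t → g1 a t = g2 a t) :
    ∀ t n, macRepFold g1 t n = macRepFold g2 t n := by
  intro t
  induction t with
  | zero => intro n; simp [macRepFold]
  | succ t ih =>
      intro n
      by_cases hn : n = 0
      · simp [macRepFold, hn]
      · rw [macRepFold, macRepFold]
        simp only [if_neg hn]
        rw [h _ _ (by omega), ih]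

lemma macRepFold_add (g1 g2 : ℕ → ℕ → ℕ) :
    ∀ t n, macRepFold (fun a s => g1 a s + g2 a s) t n
      = macRepFold g1 t n + macRepFold g2 t n := by
  intro t
  induction t with
  | zero => intro n; simp [macRepFold]
  | succ t ih =>
      intro n
      by_cases hn : n = 0
      · simp [macRepFold, hn]
      · rw [macRepFold, macRepFold, macRepFold]
        simp only [if_neg hn]
        rw [ih]
        ring

lemma macRepFold_choose : ∀ t n, 1 ≤ t → macRepFold (fun a s => Nat.choose a s) t n = n := by
  intro t
  induction t with
  | zero => omega
  | succ t ih =>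
      intro n _
      by_cases hn : n = 0
      · simp [macRepFold, hn]
      · obtain ⟨h1, h2, h3⟩ := greedy_bounds (t := t + 1) (n := n) (by omega) (by omega)
        set a := Nat.findGreatest (fun a => Nat.choose a (t + 1) ≤ n) (n + (t + 1)) with ha
        rw [macRepFold_step _ (by omega) (by omega) h1 h2 h3]
        simp only [Nat.add_sub_cancel]
        rcases Nat.eq_zero_or_pos t with rfl | ht
        · simp only [Nat.zero_add] at h1 h2 h3 ⊢
          have han : a = n := by
            have hc1 := Nat.choose_one_right a
            have hc2 := Nat.choose_one_right (a + 1)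
            omega
          rw [han]
          simp [macRepFold, Nat.choose_one_right]
        · rw [ih _ ht]
          omega

/-- Packaged greedy step: one `b` that works for every `g`. -/
lemma greedy_step {t n : ℕ} (ht : 1 ≤ t) (hn : 0 < n) :
    ∃ b, t ≤ b ∧ Nat.choose b t ≤ n ∧ n < Nat.choose (b + 1) t ∧
      ∀ g : ℕ → ℕ → ℕ, macRepFold g t n = g b t + macRepFold g (t - 1) (n - Nat.choose b t) := by
  obtain ⟨h1, h2, h3⟩ := greedy_bounds ht hn
  exact ⟨_, h1, h2, h3, fun g => macRepFold_step g ht hn h1 h2 h3⟩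

lemma D_zero (t : ℕ) : D t 0 = 0 := macRepFold_zero _ _
lemma U_zero (t : ℕ) : U t 0 = 0 := macRepFold_zero _ _
lemma E_zero (t : ℕ) : E t 0 = 0 := macRepFold_zero _ _

lemma D_one {n : ℕ} : D 1 n = if n = 0 then 0 else n + 1 := by
  by_cases hn : n = 0
  · rw [if_pos hn, hn, D_zero]
  · rw [if_neg hn, D, fold_one _ (by omega), Nat.choose_one_right]

lemma U_one {n : ℕ} : U 1 n = n - 1 := by
  by_cases hn : n = 0
  · rw [hn, U_zero]
  · rw [U, fold_one _ (by omega), Nat.choose_one_right]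

lemma E_one {n : ℕ} (hn : 0 < n) : E 1 n = if n = 1 then 1 else 0 := by
  rw [E, fold_one _ hn]

lemma D_lt : ∀ t n a, n < Nat.choose (a + 1) (t + 1) → D (t + 1) n < Nat.choose (a + 2) (t + 1) := by
  intro t
  induction t with
  | zero =>
      intro n a h
      rw [Nat.zero_add] at h ⊢
      rw [D_one]
      have h1 := Nat.choose_one_right (a + 1)
      have h2 := Nat.choose_one_right (a + 2)
      split <;> omega
  | succ t ih =>
      intro n a h
      have h' : n < Nat.choose (a + 1) (t + 2) := h
      show D (t + 2) n < Nat.choose (a + 2) (t + 2)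
      have hta : t + 2 ≤ a + 1 := by
        by_contra hc
        rw [Nat.choose_eq_zero_of_lt (by omega)] at h'
        omega
      by_cases hn : n = 0
      · rw [hn, D_zero]
        exact Nat.choose_pos (by omega)
      · obtain ⟨b, h1, h2, h3, hstep⟩ := greedy_step (t := t + 2) (by omega) (by omega : 0 < n)
        have hba : b ≤ a := top_le h2 h'
        have hDn : D (t + 2) n = Nat.choose (b + 1) (t + 2)
            + D (t + 1) (n - Nat.choose b (t + 2)) := hstep _
        have hrem : n - Nat.choose b (t + 2) < Nat.choose b (t + 1) := by
          have hp : Nat.choose (b + 1) (t + 2)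
              = Nat.choose b (t + 1) + Nat.choose b (t + 2) :=
            Nat.choose_succ_succ' b (t + 1)
          omega
        have hrem' : n - Nat.choose b (t + 2) < Nat.choose (b - 1 + 1) (t + 1) := by
          rwa [Nat.sub_add_cancel (by omega : 1 ≤ b)]
        have hIH := ih _ _ hrem'
        rw [show b - 1 + 2 = b + 1 by omega] at hIH
        have hp2 : Nat.choose (b + 2) (t + 2)
            = Nat.choose (b + 1) (t + 1) + Nat.choose (b + 1) (t + 2) :=
          Nat.choose_succ_succ' (b + 1) (t + 1)
        have hmono : Nat.choose (b + 2) (t + 2) ≤ Nat.choose (a + 2) (t + 2) :=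
          Nat.choose_le_choose _ (by omega)
        omega

lemma D_strictMono : ∀ t m n, m < n → D (t + 1) m < D (t + 1) n := by
  intro t
  induction t with
  | zero =>
      intro m n h
      rw [Nat.zero_add, D_one, D_one, if_neg (by omega : n ≠ 0)]
      split <;> omega
  | succ t ih =>
      intro m n h
      show D (t + 2) m < D (t + 2) n
      obtain ⟨b, h1, h2, h3, hstepn⟩ := greedy_step (t := t + 2) (by omega) (by omega : 0 < n)
      have hDn : D (t + 2) n = Nat.choose (b + 1) (t + 2)
          + D (t + 1) (n - Nat.choose b (t + 2)) := hstepn _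
      by_cases hm : m = 0
      · rw [hm, D_zero, hDn]
        have := Nat.choose_pos (show t + 2 ≤ b + 1 by omega)
        omega
      · obtain ⟨c, g1, g2, g3, hstepm⟩ := greedy_step (t := t + 2) (by omega) (by omega : 0 < m)
        have hDm : D (t + 2) m = Nat.choose (c + 1) (t + 2)
            + D (t + 1) (m - Nat.choose c (t + 2)) := hstepm _
        have hcb : c ≤ b := top_le (g2.trans (by omega)) h3
        rcases Nat.lt_or_ge c b with hlt | hge
        · have hDmlt : D (t + 2) m < Nat.choose (c + 2) (t + 2) := D_lt _ _ _ g3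
          have : Nat.choose (c + 2) (t + 2) ≤ Nat.choose (b + 1) (t + 2) :=
            Nat.choose_le_choose _ (by omega)
          omega
        · have hcb' : c = b := by omega
          subst hcb'
          have := ih (m - Nat.choose c (t + 2)) (n - Nat.choose c (t + 2)) (by omega)
          omega

lemma D_mono {t m n : ℕ} (h : m ≤ n) : D (t + 1) m ≤ D (t + 1) n := by
  rcases Nat.lt_or_ge m n with h' | h'
  · exact (D_strictMono t m n h').le
  · have : m = n := by omega
    rw [this]

lemma U_diag : ∀ t n, n ≤ t + 1 → U (t + 1) n = 0 ∧ E (t + 1) n = n := by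
  intro t
  induction t with
  | zero =>
      intro n hn
      interval_cases n
      · exact ⟨U_zero _, E_zero _⟩
      · constructor
        · rw [Nat.zero_add, U_one]
        · rw [Nat.zero_add, E_one (by omega), if_pos rfl]
  | succ t ih =>
      intro n hn
      show U (t + 2) n = 0 ∧ E (t + 2) n = n
      by_cases h0 : n = 0
      · rw [h0]; exact ⟨U_zero _, E_zero _⟩
      · have hb1 : Nat.choose (t + 2) (t + 2) ≤ n := by rw [Nat.choose_self]; omega
        have hb2 : n < Nat.choose (t + 3) (t + 2) := by
          rw [Nat.choose_succ_self_right]; omega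
        obtain ⟨b, h1, h2, h3, hstep⟩ := greedy_step (t := t + 2) (by omega) (by omega : 0 < n)
        have hbe : b = t + 2 := by
          have := top_le h2 hb2
          have := top_le hb1 h3
          omega
        subst hbe
        rw [Nat.choose_self] at h2 hstep
        have hrec := ih (n - 1) (by omega)
        constructor
        · have h5 := hrec.1
          rw [U] at h5
          rw [U, hstep (fun x s => Nat.choose (x - 1) s)]
          have h4 : Nat.choose (t + 1) (t + 2) = 0 := Nat.choose_eq_zero_of_lt (by omega)
          simp only [show t + 2 - 1 = t + 1 from rfl, h5, h4]
        · have h5 := hrec.2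
          rw [E] at h5
          rw [E, hstep (fun x s => if x = s then 1 else 0)]
          simp only [show t + 2 - 1 = t + 1 from rfl, h5, if_pos]
          omega

lemma U_lt : ∀ t n a, t + 2 ≤ a → n < Nat.choose a (t + 1) →
    U (t + 1) n < Nat.choose (a - 1) (t + 1) := by
  intro t
  induction t with
  | zero =>
      intro n a ha h
      rw [Nat.zero_add] at h ⊢
      rw [Nat.choose_one_right] at h
      rw [U_one, Nat.choose_one_right]
      omega
  | succ t ih =>
      intro n a ha h
      have h' : n < Nat.choose a (t + 2) := h
      show U (t + 2) n < Nat.choose (a - 1) (t + 2)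
      by_cases hn : n = 0
      · rw [hn, U_zero]
        exact Nat.choose_pos (by omega)
      · obtain ⟨b, h1, h2, h3, hstep⟩ := greedy_step (t := t + 2) (by omega) (by omega : 0 < n)
        have hba : b ≤ a - 1 := by
          have : b < a := by
            by_contra hc
            have := Nat.choose_le_choose (t + 2) (show a ≤ b by omega)
            omega
          omega
        have hUn : U (t + 2) n = Nat.choose (b - 1) (t + 2)
            + U (t + 1) (n - Nat.choose b (t + 2)) := hstep _
        have hrem : n - Nat.choose b (t + 2) < Nat.choose b (t + 1) := by
          have hp : Nat.choose (b + 1) (t + 2)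
              = Nat.choose b (t + 1) + Nat.choose b (t + 2) :=
            Nat.choose_succ_succ' b (t + 1)
          omega
        have hIH := ih (n - Nat.choose b (t + 2)) b (by omega) hrem
        have hp2 : Nat.choose b (t + 2)
            = Nat.choose (b - 1) (t + 1) + Nat.choose (b - 1) (t + 2) := by
          have := Nat.choose_succ_succ' (b - 1) (t + 1)
          rwa [Nat.sub_add_cancel (by omega : 1 ≤ b)] at this
        have hmono : Nat.choose b (t + 2) ≤ Nat.choose (a - 1) (t + 2) :=
          Nat.choose_le_choose _ hba
        omega

/-- Main key lemma: `D (U n) + E n = n` and `D (U n + 1) ≥ n + 1`. -/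
lemma key : ∀ t n, D (t + 1) (U (t + 1) n) + E (t + 1) n = n ∧
    n + 1 ≤ D (t + 1) (U (t + 1) n + 1) := by
  intro t
  induction t with
  | zero =>
      intro n
      rw [Nat.zero_add]
      by_cases hn : n = 0
      · subst hn
        refine ⟨by rw [U_zero, D_zero, E_zero], ?_⟩
        rw [U_zero, Nat.zero_add, D_one]
        norm_num
      · rw [U_one, E_one (by omega), D_one, D_one]
        constructor
        · split <;> split <;> omega
        · split <;> omega
  | succ t ih =>
      intro n
      show D (t + 2) (U (t + 2) n) + E (t + 2) n = n ∧ n + 1 ≤ D (t + 2) (U (t + 2) n + 1)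
      by_cases hn : n = 0
      · subst hn
        constructor
        · rw [U_zero, D_zero, E_zero]
        · rw [U_zero, Nat.zero_add]
          obtain ⟨b, h1, h2, h3, hstep⟩ := greedy_step (t := t + 2) (by omega) one_pos
          have hD1 : D (t + 2) 1 = Nat.choose (b + 1) (t + 2)
              + D (t + 1) (1 - Nat.choose b (t + 2)) := hstep _
          have := Nat.choose_pos (show t + 2 ≤ b + 1 by omega)
          omega
      · obtain ⟨b, h1, h2, h3, hstep⟩ := greedy_step (t := t + 2) (by omega) (by omega : 0 < n)
        set r := n - Nat.choose b (t + 2) with hr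
        have hrem : r < Nat.choose b (t + 1) := by
          have hp : Nat.choose (b + 1) (t + 2)
              = Nat.choose b (t + 1) + Nat.choose b (t + 2) :=
            Nat.choose_succ_succ' b (t + 1)
          omega
        have hUn : U (t + 2) n = Nat.choose (b - 1) (t + 2) + U (t + 1) r := hstep _
        have hEn : E (t + 2) n = (if b = t + 2 then 1 else 0) + E (t + 1) r := hstep _
        rcases Nat.eq_or_lt_of_le h1 with hbe | hblt
        · -- diagonal case : b = t + 2
          have hbe' : b = t + 2 := hbe.symm
          subst hbe'
          rw [Nat.choose_self] at h2 hr
          have hrb : r ≤ t + 1 := by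
            have : Nat.choose (t + 2 + 1) (t + 2) = t + 3 := by
              rw [show t + 2 + 1 = t + 3 from rfl, Nat.choose_succ_self_right]
            omega
          obtain ⟨hU0, hEr⟩ := U_diag t r hrb
          have hc0 : Nat.choose (t + 2 - 1) (t + 2) = 0 := Nat.choose_eq_zero_of_lt (by omega)
          rw [hU0, hc0] at hUn
          have hUn' : U (t + 2) n = 0 := by omega
          rw [hEr, if_pos rfl] at hEn
          constructor
          · rw [hUn', D_zero, hEn]
            omega
          · rw [hUn']
            obtain ⟨c, g1, g2, g3, gstep⟩ := greedy_step (t := t + 2) (by omega) one_pos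
            have hce : c = t + 2 := by
              have := top_le g2 (show (1 : ℕ) < Nat.choose (t + 2 + 1) (t + 2) by
                rw [show t + 2 + 1 = t + 3 from rfl, Nat.choose_succ_self_right]; omega)
              omega
            subst hce
            have hD1 : D (t + 2) 1 = Nat.choose (t + 2 + 1) (t + 2)
                + D (t + 1) (1 - Nat.choose (t + 2) (t + 2)) := gstep _
            rw [Nat.choose_self] at hD1
            have h8 : Nat.choose (t + 2 + 1) (t + 2) = t + 3 := by
              rw [show t + 2 + 1 = t + 3 from rfl, Nat.choose_succ_self_right]
            have h9 : Nat.choose (t + 2 + 1) (t + 2) = Nat.choose (t + 3) (t + 2) := rfl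
            have : n < t + 3 := by rw [h9, Nat.choose_succ_self_right] at h3; exact h3
            rw [Nat.zero_add, hD1, h8]
            simp only [Nat.sub_self, D_zero]
            omega
        · -- b ≥ t + 3
          set u := U (t + 1) r with hu
          have hulb : u < Nat.choose (b - 1) (t + 1) := U_lt t r b (by omega) hrem
          have hp : Nat.choose b (t + 2)
              = Nat.choose (b - 1) (t + 1) + Nat.choose (b - 1) (t + 2) := by
            have := Nat.choose_succ_succ' (b - 1) (t + 1)
            rwa [Nat.sub_add_cancel (by omega : 1 ≤ b)] at this
          have hpos : 0 < Nat.choose (b - 1) (t + 2) := Nat.choose_pos (by omega)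
          obtain ⟨ih1, ih2⟩ := ih r
          rw [← hu] at ih1 ih2
          -- step for D at U (t+2) n : top term is b - 1
          have hstepU := macRepFold_step (fun x s => Nat.choose (x + 1) s)
            (t := t + 2) (n := U (t + 2) n) (a := b - 1) (by omega)
            (by rw [hUn]; omega) (by omega)
            (by rw [hUn]; omega)
            (by rw [hUn, show b - 1 + 1 = b by omega]; omega)
          rw [hUn] at hstepU
          have hDU : D (t + 2) (U (t + 2) n) = Nat.choose (b - 1 + 1) (t + 2)
              + D (t + 1) u := by
            rw [D, hUn, hstepU]
            rw [show Nat.choose (b - 1) (t + 2) + u - Nat.choose (b - 1) (t + 2) = u by omega]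
            rfl
          rw [show b - 1 + 1 = b by omega] at hDU
          constructor
          · rw [hDU, hEn, if_neg (by omega)]
            omega
          · -- the +1 case
            rcases Nat.eq_or_lt_of_le (show u + 1 ≤ Nat.choose (b - 1) (t + 1) by omega)
              with hue | hult
            · -- u + 1 = C(b-1, t+1) : U n + 1 = C(b, t+2)
              have hM : U (t + 2) n + 1 = Nat.choose b (t + 2) := by omega
              have hstep1 := macRepFold_step (fun x s => Nat.choose (x + 1) s)
                (t := t + 2) (n := U (t + 2) n + 1) (a := b) (by omega) (by omega)
                (by omega) (by omega) (by rw [hM]; omega)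
              have hD1 : D (t + 2) (U (t + 2) n + 1) = Nat.choose (b + 1) (t + 2)
                  + D (t + 1) (U (t + 2) n + 1 - Nat.choose b (t + 2)) := hstep1
              rw [show U (t + 2) n + 1 - Nat.choose b (t + 2) = 0 by omega, D_zero] at hD1
              omega
            · -- u + 1 < C(b-1, t+1) : top term is still b - 1
              have hstep1 := macRepFold_step (fun x s => Nat.choose (x + 1) s)
                (t := t + 2) (n := U (t + 2) n + 1) (a := b - 1) (by omega) (by omega)
                (by omega) (by rw [hUn]; omega)
                (by rw [hUn, show b - 1 + 1 = b by omega]; omega)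
              have hD1 : D (t + 2) (U (t + 2) n + 1) = Nat.choose (b - 1 + 1) (t + 2)
                  + D (t + 1) (U (t + 2) n + 1 - Nat.choose (b - 1) (t + 2)) := hstep1
              rw [show U (t + 2) n + 1 - Nat.choose (b - 1) (t + 2) = u + 1 by omega] at hD1
              rw [show b - 1 + 1 = b by omega] at hD1
              omega

lemma le_U_iff_D_le {t m n : ℕ} : m ≤ U (t + 1) n ↔ D (t + 1) m ≤ n := by
  constructor
  · intro h
    have h1 := (key t n).1
    have h2 : D (t + 1) m ≤ D (t + 1) (U (t + 1) n) := D_mono h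
    omega
  · intro h
    by_contra hc
    have h2 := (key t n).2
    have h3 : D (t + 1) (U (t + 1) n + 1) ≤ D (t + 1) m :=
      D_mono (show U (t + 1) n + 1 ≤ m by omega)
    omega

lemma D_eq_add_L (t m : ℕ) :
    D (t + 1) m = m + macRepFold (fun a s => Nat.choose a (s - 1)) (t + 1) m := by
  have hc : ∀ (a s : ℕ), 1 ≤ s → Nat.choose (a + 1) s
      = Nat.choose a s + Nat.choose a (s - 1) := by
    intro a s hs
    obtain ⟨s', rfl⟩ : ∃ s'', s = s'' + 1 := ⟨s - 1, by omega⟩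
    rw [Nat.add_sub_cancel, Nat.choose_succ_succ' a s']
    omega
  rw [D, macRepFold_congr hc (t + 1) m, macRepFold_add, macRepFold_choose _ _ (by omega)]


lemma core (k m n : ℕ) : m + partialLower k m ≤ n ↔ m ≤ partialUpper k n := by
  have h : m ≤ U (k + 1) n ↔ D (k + 1) m ≤ n := le_U_iff_D_le
  have hD := D_eq_add_L k m
  have e1 : partialUpper k n = U (k + 1) n := rfl
  have e2 : partialLower k m = macRepFold (fun a s => Nat.choose a (s - 1)) (k + 1) m := rfl
  constructor
  · intro hle
    rw [e1]
    exact h.mpr (by omega)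
  · intro hle
    rw [e1] at hle
    have := h.mp hle
    omega

end MacAux2

/-- Corollary 1.5, (b) ⟺ (b⁺): for eventually-zero sequences `f, β` of nonnegative
integers: (for all `k ≥ 1`, `χ_k + β_k ≥ 0` and `∂_k(χ_k + β_k) ≤ χ_{k−1}`) iff
(for all `k ≥ 1`, `0 ≤ f_k − χ_{k−1} ≤ ∂^k(f_k)`).
Here `χ k` denotes `χ_{k−1} = Σ_{j ≥ k} (−1)^{j−k}(f_j − β_j)`,
so `χ_k + β_k = χ (k+1) + β k`. -/
theorem shadow_ineq_iff_partialUpper_ineq (f β : ℕ → ℕ)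
    (hf : ∃ N, ∀ j, N ≤ j → f j = 0) (hβ : ∃ N, ∀ j, N ≤ j → β j = 0)
    (χ : ℕ → ℤ)
    (hχ : ∀ k, χ k = ∑ᶠ j : ℕ,
      if k ≤ j then (-1 : ℤ) ^ (j - k) * ((f j : ℤ) - (β j : ℤ)) else 0) :
    (∀ k, 1 ≤ k → 0 ≤ χ (k + 1) + (β k : ℤ) ∧
        (partialLower k (χ (k + 1) + (β k : ℤ)).toNat : ℤ) ≤ χ k) ↔
    (∀ k, 1 ≤ k → 0 ≤ (f k : ℤ) - χ k ∧
        (f k : ℤ) - χ k ≤ (partialUpper k (f k) : ℤ)) := by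
  classical
  obtain ⟨Nf, hNf⟩ := hf
  obtain ⟨Nb, hNb⟩ := hβ
  have hrec : ∀ k, χ k = (f k : ℤ) - (β k : ℤ) - χ (k + 1) := by
    intro k
    set N := max (max Nf Nb) (k + 2) with hN
    have hNk : k + 2 ≤ N := le_max_right _ _
    have hzero : ∀ j, N ≤ j → (f j : ℤ) - (β j : ℤ) = 0 := by
      intro j hj
      rw [hNf j (le_trans (le_trans (le_max_left _ _) (le_max_left _ _)) hj),
        hNb j (le_trans (le_trans (le_max_right _ _) (le_max_left _ _)) hj)]
      simp
    have hfin : ∀ k', χ k' = ∑ j ∈ Finset.range N,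
        (if k' ≤ j then (-1 : ℤ) ^ (j - k') * ((f j : ℤ) - (β j : ℤ)) else 0) := by
      intro k'
      rw [hχ k']
      apply finsum_eq_sum_of_support_subset
      intro j hj
      simp only [Function.mem_support] at hj
      simp only [Finset.coe_range, Set.mem_Iio]
      by_contra hc
      apply hj
      by_cases hk'j : k' ≤ j
      · rw [if_pos hk'j, hzero j (by omega)]
        ring
      · rw [if_neg hk'j]
    rw [hfin k, hfin (k + 1)]
    have hterm : ∀ j ∈ Finset.range N,
        (if k ≤ j then (-1 : ℤ) ^ (j - k) * ((f j : ℤ) - (β j : ℤ)) else 0)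
        = (if j = k then ((f k : ℤ) - (β k : ℤ)) else 0)
          - (if k + 1 ≤ j then (-1 : ℤ) ^ (j - (k + 1)) * ((f j : ℤ) - (β j : ℤ)) else 0) := by
      intro j _
      by_cases h1 : k ≤ j
      · by_cases h2 : j = k
        · subst h2
          rw [if_pos le_rfl, if_pos rfl, if_neg (by omega), Nat.sub_self]
          ring
        · rw [if_pos h1, if_neg h2, if_pos (by omega : k + 1 ≤ j),
            show j - k = (j - (k + 1)) + 1 by omega, pow_succ]
          ring
      · rw [if_neg h1, if_neg (by omega), if_neg (by omega : ¬ (k + 1 ≤ j))]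
        ring
    rw [Finset.sum_congr rfl hterm, Finset.sum_sub_distrib,
      Finset.sum_ite_eq' (Finset.range N) k (fun _ => (f k : ℤ) - (β k : ℤ)),
      if_pos (Finset.mem_range.mpr (by omega))]
  constructor
  · intro H k hk
    obtain ⟨h1, h2⟩ := H k hk
    have hm : (f k : ℤ) - χ k = χ (k + 1) + (β k : ℤ) := by
      have := hrec k; linarith
    rw [hm]
    refine ⟨h1, ?_⟩
    set M := (χ (k + 1) + (β k : ℤ)).toNat with hM
    have hMv : (M : ℤ) = χ (k + 1) + (β k : ℤ) := Int.toNat_of_nonneg h1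
    have hχk : χ k = (f k : ℤ) - M := by
      rw [hMv]; have := hrec k; linarith
    have hnat : M + partialLower k M ≤ f k := by
      have hz : (M : ℤ) + (partialLower k M : ℤ) ≤ (f k : ℤ) := by
        rw [hχk] at h2; linarith
      exact_mod_cast hz
    have hres := (MacAux2.core k M (f k)).mp hnat
    rw [← hMv]
    exact_mod_cast hres
  · intro H k hk
    obtain ⟨h1, h2⟩ := H k hk
    have hm : (f k : ℤ) - χ k = χ (k + 1) + (β k : ℤ) := by
      have := hrec k; linarith
    rw [hm] at h1 h2
    refine ⟨h1, ?_⟩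
    set M := (χ (k + 1) + (β k : ℤ)).toNat with hM
    have hMv : (M : ℤ) = χ (k + 1) + (β k : ℤ) := Int.toNat_of_nonneg h1
    have hMle : M ≤ partialUpper k (f k) := by
      rw [← hMv] at h2; exact_mod_cast h2
    have hnat := (MacAux2.core k M (f k)).mpr hMle
    have hχk : χ k = (f k : ℤ) - M := by
      rw [hMv]; have := hrec k; linarith
    rw [hχk]
    have hz : (M : ℤ) + (partialLower k M : ℤ) ≤ (f k : ℤ) := by exact_mod_cast hnat
    linarith
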